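/- arXiv:2408.13083 — 6 statements merged into one kernel-verified Lean document; each statement's English description precedes it below -/
import Mathlib

section
/- Let μ > 0 and ν > 0 be real numbers and k ∈ ℕ. Then ∑_{j=0}^{k} C(k,j) · 1/((μ)_j (ν)_{k−j}) = (μ+ν+k−1)_k / ((μ)_k (ν)_k), where C(k,j) is the binomial coefficient. Equivalently, ∑_{j=0}^{k} C(k,j)² · (j!(k−j)!)/((μ)_j (ν)_{k−j}) = k!·(μ+ν+k−1)_k/((μ)_k (ν)_k); this computes the squared norm of (z−w)^k in the tensor product H_μ ⊗ H_ν of weighted Bergman spaces, and hence the normalizing constant C_{μ,ν,k} of the intertwining projection, via C_{μ,ν,k}^{−2} = k!·(μ+ν+k−1)_k/((μ)_k (ν)_k). -/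
open Finset Polynomial

/-- The Pochhammer symbol `(a)_n = a(a+1)⋯(a+n-1)` for a real number `a`. -/
noncomputable def poch (a : ℝ) (n : ℕ) : ℝ := ∏ i ∈ Finset.range n, (a + i)

lemma poch_pos {a : ℝ} (ha : 0 < a) (n : ℕ) : 0 < poch a n := by
  apply Finset.prod_pos
  intro i _
  positivity

lemma poch_add (a : ℝ) (m n : ℕ) : poch a (m + n) = poch a m * poch (a + m) n := by
  unfold poch
  rw [Finset.prod_range_add]
  congr 1
  apply Finset.prod_congr rfl
  intro i _
  push_cast
  ring

lemma poch_succ' (a : ℝ) (n : ℕ) : poch a (n + 1) = poch (a + 1) n * a := by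
  unfold poch
  rw [Finset.prod_range_succ']
  simp only [Nat.cast_zero, add_zero]
  congr 1
  apply Finset.prod_congr rfl
  intro i _
  push_cast
  ring

lemma dp_smeval (n : ℕ) (x : ℝ) :
    (descPochhammer ℤ n).smeval x = poch (x - n + 1) n := by
  induction n with
  | zero => simp [poch, descPochhammer_zero, Polynomial.smeval_one]
  | succ n ih =>
    rw [descPochhammer_succ_right, Polynomial.smeval_mul, ih, Polynomial.smeval_sub,
      Polynomial.smeval_X, Polynomial.smeval_natCast]
    have h : x - ((n : ℝ) + 1) + 1 = x - n := by ring
    push_cast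
    rw [h, poch_succ']
    simp [pow_one, pow_zero]

lemma vandermonde (μ ν : ℝ) (k : ℕ) :
    poch (μ + ν + k - 1) k =
      ∑ j ∈ Finset.range (k + 1),
        (k.choose j : ℝ) * (poch (ν + (k - j : ℕ)) j * poch (μ + j) (k - j)) := by
  have h := Ring.descPochhammer_smeval_add (R := ℝ) (r := ν + k - 1) (s := μ + k - 1) k
    (Commute.all _ _)
  rw [Finset.Nat.sum_antidiagonal_eq_sum_range_succ
    (fun i j => (Nat.choose k i : ℝ) * ((descPochhammer ℤ i).smeval (ν + k - 1) *
      (descPochhammer ℤ j).smeval (μ + k - 1)))] at h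
  simp only [dp_smeval] at h
  have hl : (ν + ↑k - 1 + (μ + ↑k - 1)) - ↑k + 1 = μ + ν + ↑k - 1 := by ring
  rw [hl] at h
  rw [h]
  apply Finset.sum_congr rfl
  intro j hj
  have hjk : j ≤ k := Nat.lt_succ_iff.mp (Finset.mem_range.mp hj)
  have h1 : (ν + ↑k - 1) - ↑j + 1 = ν + ((k : ℝ) - j) := by ring
  have h2 : (μ + ↑k - 1) - ↑(k - j) + 1 = μ + ((k:ℝ) - (k - j : ℕ)) := by ring
  rw [h1, h2, Nat.cast_sub hjk]
  congr 3
  ring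

/-- `∑_{j=0}^{k} C(k,j)/((μ)_j (ν)_{k−j}) = (μ+ν+k−1)_k / ((μ)_k (ν)_k)`, and equivalently
`∑_{j=0}^{k} C(k,j)²·(j!(k−j)!)/((μ)_j (ν)_{k−j}) = k!·(μ+ν+k−1)_k/((μ)_k (ν)_k)`,
which computes the squared norm of `(z−w)^k` in `H_μ ⊗ H_ν` and hence the
normalizing constant `C_{μ,ν,k}` via `C_{μ,ν,k}^{−2} = k!·(μ+ν+k−1)_k/((μ)_k (ν)_k)`. -/
theorem norm_constant_identity (μ ν : ℝ) (hμ : 0 < μ) (hν : 0 < ν) (k : ℕ) :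
    (∑ j ∈ Finset.range (k + 1),
        (k.choose j : ℝ) / (poch μ j * poch ν (k - j)) =
      poch (μ + ν + k - 1) k / (poch μ k * poch ν k)) ∧
    (∑ j ∈ Finset.range (k + 1),
        (k.choose j : ℝ) ^ 2 * ((Nat.factorial j : ℝ) * (Nat.factorial (k - j) : ℝ)) /
          (poch μ j * poch ν (k - j)) =
      (Nat.factorial k : ℝ) * poch (μ + ν + k - 1) k / (poch μ k * poch ν k)) := by
  have key : ∀ j ∈ Finset.range (k + 1),
      (k.choose j : ℝ) / (poch μ j * poch ν (k - j)) =
        (k.choose j : ℝ) * (poch (ν + (k - j : ℕ)) j * poch (μ + j) (k - j)) /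
          (poch μ k * poch ν k) := by
    intro j hj
    have hjk : j ≤ k := Nat.lt_succ_iff.mp (Finset.mem_range.mp hj)
    have hμk : poch μ k = poch μ j * poch (μ + j) (k - j) := by
      rw [← poch_add, Nat.add_sub_cancel' hjk]
    have hνk : poch ν k = poch ν (k - j) * poch (ν + (k - j : ℕ)) j := by
      rw [← poch_add, Nat.sub_add_cancel hjk]
    rw [hμk, hνk]
    have p1 := poch_pos hμ j
    have p2 := poch_pos hν (k - j)
    have p3 := poch_pos (by positivity : (0:ℝ) < μ + j) (k - j)
    have p4 := poch_pos (by positivity : (0:ℝ) < ν + (k - j : ℕ)) j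
    rw [div_eq_div_iff (by positivity) (by positivity)]
    ring
  have h1 : ∑ j ∈ Finset.range (k + 1),
      (k.choose j : ℝ) / (poch μ j * poch ν (k - j)) =
      poch (μ + ν + k - 1) k / (poch μ k * poch ν k) := by
    rw [Finset.sum_congr rfl key, ← Finset.sum_div, ← vandermonde]
  refine ⟨h1, ?_⟩
  have h2 : ∀ j ∈ Finset.range (k + 1),
      (k.choose j : ℝ) ^ 2 * ((Nat.factorial j : ℝ) * (Nat.factorial (k - j) : ℝ)) /
        (poch μ j * poch ν (k - j)) =
      (Nat.factorial k : ℝ) * ((k.choose j : ℝ) / (poch μ j * poch ν (k - j))) := by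
    intro j hj
    have hjk : j ≤ k := Nat.lt_succ_iff.mp (Finset.mem_range.mp hj)
    have hc : (k.choose j : ℝ) * (Nat.factorial j : ℝ) * (Nat.factorial (k - j) : ℝ) =
        (Nat.factorial k : ℝ) := by
      exact_mod_cast congrArg (Nat.cast : ℕ → ℝ)
        (Nat.choose_mul_factorial_mul_factorial hjk)
    rw [mul_div_assoc]
    rw [← hc]
    ring
  rw [Finset.sum_congr rfl h2, ← Finset.mul_sum, h1, mul_div_assoc]
end

section
/- Let f : 𝔻 → ℝ be continuous with ∫_{𝔻}|f| dι < ∞. Then for every z ∈ 𝔻, the normalized Berezin transforms converge pointwise: lim_{ν→∞, ν ∈ ℕ, ν ≥ 2} (ν−1)·(B_ν f)(z) = f(z). -/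
open MeasureTheory Complex Filter

/-- The open unit disk in `ℂ`. -/
def unitDisk : Set ℂ := {z : ℂ | ‖z‖ < 1}

/-- The `SU(1,1)`-invariant measure `ι` on the unit disk, `dι(z) = dA(z)/(π(1−|z|²)²)`. -/
noncomputable def iota : Measure ℂ :=
  (volume.restrict unitDisk).withDensity
    (fun z => ENNReal.ofReal (1 / (Real.pi * (1 - ‖z‖ ^ 2) ^ 2)))

instance : SigmaFinite iota := SigmaFinite.withDensity_ofReal _

/-- The Berezin transform:
`(B_ν f)(z) = ∫_𝔻 ((1−|z|²)^ν (1−|x|²)^ν / |1−z·conj(x)|^{2ν}) f(x) dι(x)`. -/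
noncomputable def berezin (ν : ℕ) (f : ℂ → ℝ) (z : ℂ) : ℝ :=
  ∫ x, ((1 - ‖z‖ ^ 2) ^ ν * (1 - ‖x‖ ^ 2) ^ ν /
      ‖1 - z * (starRingEnd ℂ) x‖ ^ (2 * ν)) * f x ∂iota


/-!
The Möbius map `φ_z w = (z - w) / (1 - z̄ w)` is an involution of `𝔻` preserving `ι`, and
`1 - |φ_z x|² = (1 - |z|²)(1 - |x|²) / |1 - z̄ x|²`. Substituting `x = φ_z w` therefore turns
`(B_ν f)(z)` into `∫ (1 - |w|²)^ν f(φ_z w) dι(w)`, the Berezin transform of `f ∘ φ_z` at the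
origin. The kernels `(ν - 1)(1 - |w|²)^ν` have `ι`-mass one, and off the disc of radius `δ` they
are at most `(ν - 1)(1 - δ²)^(ν - 2) (1 - |w|²)²`, so they form an approximate identity at `0`;
hence the normalized transforms tend to `f(φ_z 0) = f(z)`.
-/

open MeasureTheory Filter Set Topology ComplexConjugate

theorem tendsto_integral_mul_of_tendsto_integral_compl_ball {α ι : Type*} [PseudoMetricSpace α]
    [MeasurableSpace α] [OpensMeasurableSpace α] {μ : Measure α} {l : Filter ι}
    {k : ι → α → ℝ} {g : α → ℝ} {x₀ : α} (hg : ContinuousAt g x₀)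
    (hk_nonneg : ∀ᶠ n in l, 0 ≤ᵐ[μ] k n) (hk_int : ∀ᶠ n in l, Integrable (k n) μ)
    (hkg_int : ∀ᶠ n in l, Integrable (fun x => k n x * g x) μ)
    (hk_mass : ∀ᶠ n in l, ∫ x, k n x ∂μ = 1)
    (htail : ∀ᶠ δ in 𝓝[>] 0,
      Tendsto (fun n => ∫ x in (Metric.ball x₀ δ)ᶜ, k n x * |g x - g x₀| ∂μ) l (𝓝 0)) :
    Tendsto (fun n => ∫ x, k n x * g x ∂μ) l (𝓝 (g x₀)) := by
  rw [Metric.tendsto_nhds]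
  intro ε hε
  obtain ⟨δ₀, hδ₀, hg_near⟩ := Metric.continuousAt_iff.mp hg (ε / 2) (half_pos hε)
  obtain ⟨δ, hδ_tail, -, hδ_lt⟩ := (htail.and (Ioo_mem_nhdsGT hδ₀)).exists
  filter_upwards [hk_nonneg, hk_int, hkg_int, hk_mass,
    (tendsto_order.1 hδ_tail).2 _ (half_pos hε)] with n hk0 hk hkg hmass htail_small
  have hdev_eq : (fun x => |k n x * (g x - g x₀)|) =ᵐ[μ] fun x => k n x * |g x - g x₀| := by
    filter_upwards [hk0] with x hx
    rw [abs_mul, abs_of_nonneg hx]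
  have hdev_int : Integrable (fun x => k n x * |g x - g x₀|) μ := by
    refine (hkg.sub (hk.mul_const (g x₀))).abs.congr ?_
    filter_upwards [hdev_eq] with x hx
    rwa [Pi.sub_apply, ← mul_sub]
  have hnear : ∫ x in Metric.ball x₀ δ, k n x * |g x - g x₀| ∂μ ≤ ε / 2 := calc
    _ ≤ ∫ x in Metric.ball x₀ δ, ε / 2 * k n x ∂μ := by
        refine setIntegral_mono_on_ae hdev_int.integrableOn (hk.const_mul _).integrableOn
          measurableSet_ball ?_
        filter_upwards [hk0] with x hx hxδ
        rw [mul_comm, ← Real.dist_eq]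
        exact mul_le_mul_of_nonneg_right (hg_near (hxδ.trans hδ_lt)).le hx
    _ ≤ ∫ x, ε / 2 * k n x ∂μ := setIntegral_le_integral (hk.const_mul _)
        (hk0.mono fun x hx => mul_nonneg (half_pos hε).le hx)
    _ = ε / 2 := by rw [integral_const_mul, hmass, mul_one]
  calc dist (∫ x, k n x * g x ∂μ) (g x₀) = |∫ x, k n x * (g x - g x₀) ∂μ| := by
        simp only [mul_sub]
        rw [Real.dist_eq, integral_sub hkg (hk.mul_const _), integral_mul_const, hmass, one_mul]
    _ ≤ ∫ x, k n x * |g x - g x₀| ∂μ :=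
        abs_integral_le_integral_abs.trans_eq (integral_congr_ae hdev_eq)
    _ = ∫ x in Metric.ball x₀ δ, k n x * |g x - g x₀| ∂μ
          + ∫ x in (Metric.ball x₀ δ)ᶜ, k n x * |g x - g x₀| ∂μ :=
        (integral_add_compl measurableSet_ball hdev_int).symm
    _ < ε / 2 + ε / 2 := add_lt_add_of_le_of_lt hnear htail_small
    _ = ε := add_halves ε

lemma isOpen_unitDisk : IsOpen unitDisk := isOpen_lt continuous_norm continuous_const

lemma one_sub_norm_sq_pos {w : ℂ} (hw : w ∈ unitDisk) : 0 < 1 - ‖w‖ ^ 2 := by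
  have : ‖w‖ < 1 := hw
  nlinarith [norm_nonneg w]

noncomputable def iotaDensity (x : ℂ) : ℝ := 1 / (Real.pi * (1 - ‖x‖ ^ 2) ^ 2)

lemma iotaDensity_nonneg (x : ℂ) : 0 ≤ iotaDensity x := by
  unfold iotaDensity; positivity

lemma iota_eq_withDensity :
    iota = (volume.restrict unitDisk).withDensity fun x => ENNReal.ofReal (iotaDensity x) := rfl

lemma iota_apply (s : Set ℂ) :
    iota s = ∫⁻ x in s ∩ unitDisk, ENNReal.ofReal (iotaDensity x) := by
  rw [iota_eq_withDensity, withDensity_apply',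
    Measure.restrict_restrict' isOpen_unitDisk.measurableSet]

lemma ae_mem_unitDisk_iota : ∀ᵐ x ∂iota, x ∈ unitDisk :=
  (withDensity_absolutelyContinuous _ _).ae_le (ae_restrict_mem isOpen_unitDisk.measurableSet)

lemma integral_iota (g : ℂ → ℝ) :
    ∫ x, g x ∂iota = ∫ x in unitDisk, iotaDensity x * g x := by
  rw [iota_eq_withDensity, integral_withDensity_eq_integral_toReal_smul
    (by unfold iotaDensity; fun_prop) (ae_of_all _ fun _ => ENNReal.ofReal_lt_top)]
  simp only [smul_eq_mul, ENNReal.toReal_ofReal (iotaDensity_nonneg _)]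

section Moebius

noncomputable def moebius (z w : ℂ) : ℂ := (z - w) / (1 - conj z * w)

variable {z w : ℂ}

lemma moebius_zero (z : ℂ) : moebius z 0 = z := by simp [moebius]

@[fun_prop]
lemma measurable_moebius (z : ℂ) : Measurable (moebius z) := by
  unfold moebius; fun_prop

lemma one_sub_conj_mul_ne_zero (hz : z ∈ unitDisk) (hw : w ∈ unitDisk) : 1 - conj z * w ≠ 0 := by
  have hlt : ‖conj z * w‖ < 1 := by
    rw [norm_mul, Complex.norm_conj]
    exact mul_lt_one_of_nonneg_of_lt_one_left (norm_nonneg z) hz (le_of_lt hw)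
  refine sub_ne_zero.mpr fun h => ?_
  rw [← h, norm_one] at hlt
  exact lt_irrefl 1 hlt

lemma normSq_one_sub_conj_mul_sub_normSq_sub (z w : ℂ) :
    Complex.normSq (1 - conj z * w) - Complex.normSq (z - w)
      = (1 - Complex.normSq z) * (1 - Complex.normSq w) := by
  simp only [Complex.normSq_apply, Complex.sub_re, Complex.sub_im, Complex.mul_re,
    Complex.mul_im, Complex.one_re, Complex.one_im, Complex.conj_re, Complex.conj_im]
  ring

lemma one_sub_norm_sq_moebius (hz : z ∈ unitDisk) (hw : w ∈ unitDisk) :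
    1 - ‖moebius z w‖ ^ 2 = (1 - ‖z‖ ^ 2) * (1 - ‖w‖ ^ 2) / ‖1 - conj z * w‖ ^ 2 := by
  have hden : ‖1 - conj z * w‖ ^ 2 ≠ 0 := by
    simpa using one_sub_conj_mul_ne_zero hz hw
  rw [moebius, norm_div, div_pow, eq_div_iff hden, sub_mul, div_mul_cancel₀ _ hden]
  simp only [Complex.sq_norm]
  linarith [normSq_one_sub_conj_mul_sub_normSq_sub z w]

lemma moebius_mem_unitDisk (hz : z ∈ unitDisk) (hw : w ∈ unitDisk) : moebius z w ∈ unitDisk := by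
  have hpos : 0 < 1 - ‖moebius z w‖ ^ 2 := by
    rw [one_sub_norm_sq_moebius hz hw]
    have := one_sub_conj_mul_ne_zero hz hw
    have := one_sub_norm_sq_pos hz
    have := one_sub_norm_sq_pos hw
    positivity
  show ‖moebius z w‖ < 1
  nlinarith [norm_nonneg (moebius z w)]

lemma moebius_moebius (hz : z ∈ unitDisk) (hw : w ∈ unitDisk) : moebius z (moebius z w) = w := by
  have hden := one_sub_conj_mul_ne_zero hz hw
  have hzz : 1 - conj z * z ≠ 0 := one_sub_conj_mul_ne_zero hz hz
  have hden' : 1 - conj z * moebius z w = (1 - conj z * z) / (1 - conj z * w) := by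
    unfold moebius; field_simp; ring
  rw [moebius, hden', moebius, div_eq_iff (div_ne_zero hzz hden), mul_div_assoc',
    eq_div_iff hden, sub_mul, div_mul_cancel₀ _ hden]
  ring

lemma hasDerivAt_moebius (hz : z ∈ unitDisk) (hw : w ∈ unitDisk) :
    HasDerivAt (moebius z) ((conj z * z - 1) / (1 - conj z * w) ^ 2) w := by
  have hnum : HasDerivAt (fun w => z - w) (-1) w := by
    simpa using (hasDerivAt_id w).const_sub z
  have hden : HasDerivAt (fun w => 1 - conj z * w) (-conj z) w := by
    simpa using ((hasDerivAt_id w).const_mul (conj z)).const_sub 1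
  exact (hnum.div hden (one_sub_conj_mul_ne_zero hz hw)).congr_deriv (by ring)

lemma normSq_deriv_moebius_mul_iotaDensity (hz : z ∈ unitDisk) (hw : w ∈ unitDisk) :
    Complex.normSq ((conj z * z - 1) / (1 - conj z * w) ^ 2) * iotaDensity (moebius z w)
      = iotaDensity w := by
  have hzz : conj z * z - 1 = ((‖z‖ ^ 2 - 1 : ℝ) : ℂ) := by
    rw [mul_comm, Complex.mul_conj, Complex.normSq_eq_norm_sq]; push_cast; ring
  have hden : ‖1 - conj z * w‖ ≠ 0 := norm_ne_zero_iff.mpr (one_sub_conj_mul_ne_zero hz hw)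
  have := (one_sub_norm_sq_pos hz).ne'
  have := (one_sub_norm_sq_pos hw).ne'
  rw [Complex.normSq_div, hzz, Complex.normSq_ofReal, Complex.normSq_eq_norm_sq, norm_pow,
    iotaDensity, iotaDensity, one_sub_norm_sq_moebius hz hw]
  field_simp
  ring

end Moebius

section Invariance

variable {z : ℂ}

lemma leftInvOn_moebius (hz : z ∈ unitDisk) : LeftInvOn (moebius z) (moebius z) unitDisk :=
  fun _ hw => moebius_moebius hz hw

lemma image_moebius_preimage_inter_unitDisk (hz : z ∈ unitDisk) (s : Set ℂ) :
    moebius z '' (moebius z ⁻¹' s ∩ unitDisk) = s ∩ unitDisk := by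
  ext x
  constructor
  · rintro ⟨w, ⟨hws, hw⟩, rfl⟩
    exact ⟨hws, moebius_mem_unitDisk hz hw⟩
  · rintro ⟨hxs, hx⟩
    refine ⟨moebius z x, ⟨?_, moebius_mem_unitDisk hz hx⟩, moebius_moebius hz hx⟩
    rwa [mem_preimage, moebius_moebius hz hx]

lemma det_restrictScalars_toSpanSingleton (c : ℂ) :
    ((ContinuousLinearMap.toSpanSingleton ℂ c).restrictScalars ℝ).det = Complex.normSq c := by
  simp [ContinuousLinearMap.det, LinearMap.det_restrictScalars, Algebra.norm_complex_apply]

theorem measurePreserving_moebius (hz : z ∈ unitDisk) :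
    MeasurePreserving (moebius z) iota iota := by
  refine ⟨measurable_moebius z, Measure.ext fun s hs => ?_⟩
  have hpre : MeasurableSet (moebius z ⁻¹' s ∩ unitDisk) :=
    (measurable_moebius z hs).inter isOpen_unitDisk.measurableSet
  rw [Measure.map_apply (measurable_moebius z) hs, iota_apply, iota_apply,
    ← image_moebius_preimage_inter_unitDisk hz s,
    lintegral_image_eq_lintegral_abs_det_fderiv_mul volume hpre
      (fun w hw => ((hasDerivAt_moebius hz hw.2).hasFDerivAt.restrictScalars ℝ).hasFDerivWithinAt)
      ((leftInvOn_moebius hz).injOn.mono inter_subset_right)]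
  refine setLIntegral_congr_fun hpre fun w hw => ?_
  rw [det_restrictScalars_toSpanSingleton, abs_of_nonneg (Complex.normSq_nonneg _),
    ← ENNReal.ofReal_mul (Complex.normSq_nonneg _), normSq_deriv_moebius_mul_iotaDensity hz hw.2]

lemma integrable_comp_moebius (hz : z ∈ unitDisk) {g : ℂ → ℝ} (hg : Integrable g iota) :
    Integrable (fun w => g (moebius z w)) iota :=
  ((measurePreserving_moebius hz).integrable_comp hg.aestronglyMeasurable).mpr hg

lemma integral_comp_moebius (hz : z ∈ unitDisk) {g : ℂ → ℝ} (hg : AEStronglyMeasurable g iota) :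
    ∫ w, g (moebius z w) ∂iota = ∫ x, g x ∂iota := by
  have hmap := (measurePreserving_moebius hz).map_eq
  rw [← integral_map (measurable_moebius z).aemeasurable (by rwa [hmap]), hmap]

lemma berezin_eq_integral_comp_moebius (hz : z ∈ unitDisk) {f : ℂ → ℝ}
    (hf : AEStronglyMeasurable f iota) (ν : ℕ) :
    berezin ν f z = ∫ w, (1 - ‖w‖ ^ 2) ^ ν * f (moebius z w) ∂iota := by
  have hkernel : ∀ x ∈ unitDisk, (1 - ‖z‖ ^ 2) ^ ν * (1 - ‖x‖ ^ 2) ^ ν /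
      ‖1 - z * conj x‖ ^ (2 * ν) = (1 - ‖moebius z x‖ ^ 2) ^ ν := fun x hx => by
    have hnorm : ‖1 - z * conj x‖ = ‖1 - conj z * x‖ := by
      rw [← Complex.norm_conj, map_sub, map_one, map_mul, Complex.conj_conj]
    rw [one_sub_norm_sq_moebius hz hx, div_pow, mul_pow, ← hnorm, ← pow_mul]
  calc berezin ν f z = ∫ x, (1 - ‖moebius z x‖ ^ 2) ^ ν * f x ∂iota :=
        integral_congr_ae (ae_mem_unitDisk_iota.mono fun x hx => by simp only [hkernel x hx])
    _ = ∫ w, (1 - ‖moebius z (moebius z w)‖ ^ 2) ^ ν * f (moebius z w) ∂iota :=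
        (integral_comp_moebius hz ((by fun_prop : Measurable fun x =>
          (1 - ‖moebius z x‖ ^ 2) ^ ν).aestronglyMeasurable.mul hf)).symm
    _ = ∫ w, (1 - ‖w‖ ^ 2) ^ ν * f (moebius z w) ∂iota :=
        integral_congr_ae <| ae_mem_unitDisk_iota.mono fun w hw => by
          simp only [moebius_moebius hz hw]

end Invariance

lemma integral_mul_one_sub_sq_pow (n : ℕ) :
    ∫ r in (0 : ℝ)..1, r * (1 - r ^ 2) ^ n = 1 / (2 * (n + 1 : ℝ)) := by
  have hderiv : ∀ r ∈ uIcc (0 : ℝ) 1,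
      HasDerivAt (fun r : ℝ => -(1 - r ^ 2) ^ (n + 1) / (2 * (n + 1))) (r * (1 - r ^ 2) ^ n) r := by
    intro r _
    refine ((((hasDerivAt_pow 2 r).const_sub 1).pow (n + 1)).neg.div_const
      (2 * (n + 1 : ℝ))).congr_deriv ?_
    push_cast
    field_simp
  rw [intervalIntegral.integral_eq_sub_of_hasDerivAt hderiv
    (by apply Continuous.intervalIntegrable; fun_prop)]
  norm_num
  field_simp

lemma setIntegral_unitDisk_one_sub_norm_sq_pow (n : ℕ) :
    ∫ x in unitDisk, (1 - ‖x‖ ^ 2) ^ n = Real.pi / (n + 1) := by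
  have hindicator : unitDisk.indicator (fun x : ℂ => (1 - ‖x‖ ^ 2) ^ n)
      = fun x => (Iio (1 : ℝ)).indicator (fun r => (1 - r ^ 2) ^ n) ‖x‖ := by
    ext x
    by_cases hx : ‖x‖ < 1
    · rw [indicator_of_mem (show x ∈ unitDisk from hx), indicator_of_mem (mem_Iio.mpr hx)]
    · rw [indicator_of_notMem (show x ∉ unitDisk from hx),
        indicator_of_notMem (show ‖x‖ ∉ Iio 1 from hx)]
  have hradial : ∫ r in Ioi (0 : ℝ), r ^ (2 - 1) • (Iio (1 : ℝ)).indicator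
      (fun r => (1 - r ^ 2) ^ n) r = 1 / (2 * (n + 1 : ℝ)) := by
    have hIoo : Ioi (0 : ℝ) ∩ Iio 1 = Ioo 0 1 := Ioi_inter_Iio
    simp only [smul_eq_mul, Nat.reduceSub, pow_one, ← indicator_mul_right (Iio 1) (fun r : ℝ => r)]
    rw [setIntegral_indicator measurableSet_Iio, hIoo, ← integral_Ioc_eq_integral_Ioo,
      ← intervalIntegral.integral_of_le zero_le_one, integral_mul_one_sub_sq_pow]
  have hball : (volume : Measure ℂ).real (Metric.ball 0 1) = Real.pi := by
    simp [measureReal_def, Complex.volume_ball]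
  rw [← integral_indicator isOpen_unitDisk.measurableSet, hindicator,
    integral_fun_norm_addHaar volume, Complex.finrank_real_complex, hball, hradial]
  simp only [smul_eq_mul, nsmul_eq_mul]
  field_simp
  norm_num

lemma integral_one_sub_norm_sq_pow_iota (n : ℕ) :
    ∫ w, (1 - ‖w‖ ^ 2) ^ (n + 2) ∂iota = 1 / (n + 1 : ℝ) := by
  have hcancel : ∀ w ∈ unitDisk,
      iotaDensity w * (1 - ‖w‖ ^ 2) ^ (n + 2) = Real.pi⁻¹ * (1 - ‖w‖ ^ 2) ^ n := by
    intro w hw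
    have := (one_sub_norm_sq_pos hw).ne'
    rw [iotaDensity, pow_add]
    field_simp
  rw [integral_iota, setIntegral_congr_fun isOpen_unitDisk.measurableSet hcancel,
    integral_const_mul, setIntegral_unitDisk_one_sub_norm_sq_pow]
  field_simp

-- Non-integrable functions have Bochner integral `0`.
lemma integrable_one_sub_norm_sq_pow_iota (n : ℕ) :
    Integrable (fun w => (1 - ‖w‖ ^ 2) ^ (n + 2)) iota :=
  Integrable.of_integral_ne_zero (by rw [integral_one_sub_norm_sq_pow_iota]; positivity)

lemma integrable_one_sub_norm_sq_pow_mul {g : ℂ → ℝ} (hg : Integrable g iota) (n : ℕ) :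
    Integrable (fun w => (1 - ‖w‖ ^ 2) ^ n * g w) iota := by
  refine hg.bdd_mul (c := 1) (by fun_prop) (ae_mem_unitDisk_iota.mono fun w hw => ?_)
  have hpos := one_sub_norm_sq_pos hw
  rw [norm_pow, Real.norm_of_nonneg hpos.le]
  exact pow_le_one₀ hpos.le (by linarith [sq_nonneg ‖w‖])

lemma one_sub_norm_sq_pow_le (n : ℕ) {δ : ℝ} {w : ℂ} (hδ : 0 ≤ δ) (hw : w ∈ unitDisk)
    (hδw : δ ≤ ‖w‖) : (1 - ‖w‖ ^ 2) ^ (n + 2) ≤ (1 - δ ^ 2) ^ n * (1 - ‖w‖ ^ 2) ^ 2 := by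
  rw [pow_add]
  exact mul_le_mul_of_nonneg_right (pow_le_pow_left₀ (one_sub_norm_sq_pos hw).le
    (sub_le_sub_left (pow_le_pow_left₀ hδ hδw 2) 1) n) (sq_nonneg _)

lemma tendsto_setIntegral_compl_ball_kernel {h : ℂ → ℝ} (h_nonneg : ∀ w, 0 ≤ h w)
    (h_int : Integrable (fun w => (1 - ‖w‖ ^ 2) ^ 2 * h w) iota) {δ : ℝ} (hδ : δ ∈ Ioo 0 1) :
    Tendsto (fun n : ℕ => ∫ w in (Metric.ball 0 δ)ᶜ,
      (n + 1 : ℝ) * (1 - ‖w‖ ^ 2) ^ (n + 2) * h w ∂iota) atTop (𝓝 0) := by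
  set r := 1 - δ ^ 2
  set C := ∫ w, (1 - ‖w‖ ^ 2) ^ 2 * h w ∂iota
  have hr0 : 0 ≤ r := by nlinarith [hδ.1, hδ.2]
  have hr1 : r < 1 := by nlinarith [hδ.1]
  have hbound : Tendsto (fun n : ℕ => (n + 1 : ℝ) * r ^ n * C) atTop (𝓝 0) := by
    simpa [add_mul] using ((tendsto_self_mul_const_pow_of_lt_one hr0 hr1).add
      (tendsto_pow_atTop_nhds_zero_of_lt_one hr0 hr1)).mul_const C
  have hmem : ∀ᵐ w ∂iota.restrict (Metric.ball 0 δ)ᶜ, w ∈ unitDisk ∧ δ ≤ ‖w‖ := by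
    filter_upwards [ae_restrict_of_ae ae_mem_unitDisk_iota,
      ae_restrict_mem measurableSet_ball.compl] with w hw hwδ
    exact ⟨hw, by simpa using hwδ⟩
  have hkernel_nonneg : ∀ n : ℕ, 0 ≤ᵐ[iota.restrict (Metric.ball 0 δ)ᶜ]
      fun w => (n + 1 : ℝ) * (1 - ‖w‖ ^ 2) ^ (n + 2) * h w := fun n => hmem.mono fun w hw => by
    have := one_sub_norm_sq_pos hw.1
    have := h_nonneg w
    positivity
  refine squeeze_zero' (Eventually.of_forall fun n => integral_nonneg_of_ae (hkernel_nonneg n))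
    (Eventually.of_forall fun n => ?_) hbound
  calc ∫ w in (Metric.ball 0 δ)ᶜ, (n + 1 : ℝ) * (1 - ‖w‖ ^ 2) ^ (n + 2) * h w ∂iota
      ≤ ∫ w in (Metric.ball 0 δ)ᶜ, (n + 1 : ℝ) * r ^ n * ((1 - ‖w‖ ^ 2) ^ 2 * h w) ∂iota := by
        refine integral_mono_of_nonneg (hkernel_nonneg n) (h_int.const_mul _).integrableOn
          (hmem.mono fun w hw => ?_)
        have := one_sub_norm_sq_pow_le n hδ.1.le hw.1 hw.2
        have := h_nonneg w
        calc (n + 1 : ℝ) * (1 - ‖w‖ ^ 2) ^ (n + 2) * h w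
            ≤ (n + 1 : ℝ) * (r ^ n * (1 - ‖w‖ ^ 2) ^ 2) * h w := by gcongr
          _ = (n + 1 : ℝ) * r ^ n * ((1 - ‖w‖ ^ 2) ^ 2 * h w) := by ring
    _ ≤ (n + 1 : ℝ) * r ^ n * C := by
        rw [integral_const_mul]
        exact mul_le_mul_of_nonneg_left (setIntegral_le_integral h_int
          (ae_of_all _ fun w => mul_nonneg (sq_nonneg _) (h_nonneg w))) (by positivity)

theorem tendsto_integral_kernel_mul {g : ℂ → ℝ} (hg : ContinuousAt g 0)
    (hg_int : Integrable g iota) :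
    Tendsto (fun n : ℕ => ∫ w, (n + 1 : ℝ) * (1 - ‖w‖ ^ 2) ^ (n + 2) * g w ∂iota)
      atTop (𝓝 (g 0)) := by
  refine tendsto_integral_mul_of_tendsto_integral_compl_ball hg
    (Eventually.of_forall fun n => ae_mem_unitDisk_iota.mono fun w hw => ?_)
    (Eventually.of_forall fun n => (integrable_one_sub_norm_sq_pow_iota n).const_mul _)
    (Eventually.of_forall fun n => ?_) (Eventually.of_forall fun n => ?_) ?_
  · have := one_sub_norm_sq_pos hw
    positivity
  · simpa only [mul_assoc] using (integrable_one_sub_norm_sq_pow_mul hg_int (n + 2)).const_mul _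
  · rw [integral_const_mul, integral_one_sub_norm_sq_pow_iota]
    field_simp
  · filter_upwards [Ioo_mem_nhdsGT one_pos] with δ hδ
    refine tendsto_setIntegral_compl_ball_kernel (fun w => abs_nonneg _) ?_ hδ
    refine ((integrable_one_sub_norm_sq_pow_mul hg_int 2).sub
      ((integrable_one_sub_norm_sq_pow_iota 0).mul_const (g 0))).abs.congr
      (ae_of_all _ fun w => ?_)
    simp only [Pi.sub_apply, zero_add, ← mul_sub, abs_mul, abs_sq]

/-- For `f` continuous on `𝔻` and `ι`-integrable, the normalized Berezin transforms
converge pointwise: `(ν−1)·(B_ν f)(z) → f(z)` as `ν → ∞`. -/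
theorem berezin_tendsto_pointwise (f : ℂ → ℝ) (hf_cont : ContinuousOn f unitDisk)
    (hf_int : Integrable f iota) (z : ℂ) (hz : z ∈ unitDisk) :
    Tendsto (fun ν : ℕ => ((ν : ℝ) - 1) * berezin ν f z) atTop (nhds (f z)) := by
  have hzero : (0 : ℂ) ∈ unitDisk := by simp [unitDisk]
  have hg_cont : ContinuousAt (fun w => f (moebius z w)) 0 :=
    ContinuousAt.comp_of_eq (hf_cont.continuousAt (isOpen_unitDisk.mem_nhds hz))
      (hasDerivAt_moebius hz hzero).continuousAt (moebius_zero z)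
  have hlim := tendsto_integral_kernel_mul hg_cont (integrable_comp_moebius hz hf_int)
  rw [moebius_zero] at hlim
  rw [← tendsto_add_atTop_iff_nat 2]
  refine hlim.congr fun n => ?_
  rw [berezin_eq_integral_comp_moebius hz hf_int.aestronglyMeasurable, ← integral_const_mul]
  congr 1 with w
  push_cast
  ring
end

section
/- For every real λ, the eigenvalues of the normalized Berezin transform converge to 1: lim_{ν→∞, ν ∈ ℕ, ν ≥ 2} b_ν(λ) = 1. -/
/-! Euler's limit formula gives `Γ(n + 1 + s) ~ n! · n^s` for every `s` off the poles. For
`s = -1/2 + iλ` we have `|n^s|² = 1/n`, and `n · Γ(n)Γ(n+1) = (n!)²`, so `b_{n+1}(λ)` is exactly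
the squared modulus of `Γ(n + 1 + s) / (n! · n^s)`, which tends to `1`. -/

open Complex Filter

/-- The eigenvalue `b_ν(λ) = |Γ(ν − 1/2 + iλ)|² / (Γ(ν)·Γ(ν−1))` of the normalized
Berezin transform `(ν−1)B_ν` on the spherical function `e_{λ,b}`. -/
noncomputable def bEig (ν : ℕ) (l : ℝ) : ℝ :=
  ‖Complex.Gamma ((ν : ℂ) - 1/2 + l * Complex.I)‖ ^ 2 /
    (Real.Gamma ν * Real.Gamma ((ν : ℝ) - 1))

open Topology Nat

theorem ascPochhammer_eval_eq_prod_range {R : Type*} [CommSemiring R] (n : ℕ) (r : R) :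
    (ascPochhammer R n).eval r = ∏ j ∈ Finset.range n, (r + j) := by
  induction n with
  | zero => simp
  | succ n ih => simp [ascPochhammer_succ_right, ih, Finset.prod_range_succ]

theorem Complex.tendsto_Gamma_add_nat_add_one_div {s : ℂ} (hs : ∀ k : ℕ, s ≠ -k) :
    Tendsto (fun n : ℕ => Gamma (s + (n + 1)) / (n ! * (n : ℂ) ^ s)) atTop (𝓝 1) := by
  have hΓ : Gamma s ≠ 0 := Gamma_ne_zero hs
  have h := (tendsto_const_nhds (x := Gamma s)).div (GammaSeq_tendsto_Gamma s) hΓ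
  rw [div_self hΓ] at h
  refine h.congr' ?_
  filter_upwards [eventually_ne_atTop 0] with n hn
  have hpoch := Gamma_add_nat_div_Gamma_eq (n := n + 1) s hs
  rw [ascPochhammer_eval_eq_prod_range, div_eq_iff hΓ] at hpoch
  push_cast at hpoch
  have hpow : (n : ℂ) ^ s ≠ 0 := by simp [cpow_eq_zero_iff, hn]
  have hprod : ∏ j ∈ Finset.range (n + 1), (s + j) ≠ 0 :=
    Finset.prod_ne_zero_iff.mpr fun j _ h => hs j (eq_neg_of_add_eq_zero_left h)
  simp only [Pi.div_apply, GammaSeq, hpoch]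
  field_simp

theorem bEig_add_one_eq_norm_sq (l : ℝ) {n : ℕ} (hn : n ≠ 0) :
    bEig (n + 1) l =
      ‖Gamma (-1/2 + l * I + (n + 1)) / (n ! * (n : ℂ) ^ (-1/2 + l * I))‖ ^ 2 := by
  have hn' : (0 : ℝ) < n := by positivity
  have hfact : Real.Gamma (n + 1) = n ! := Real.Gamma_nat_eq_factorial n
  have hΓn : Real.Gamma n = n ! / n := by
    rw [eq_div_iff hn'.ne', mul_comm, ← Real.Gamma_add_one hn'.ne', hfact]
  have hpow : ((n : ℝ) ^ (-1/2 : ℝ)) ^ 2 = (n : ℝ)⁻¹ := by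
    rw [← Real.rpow_natCast, ← Real.rpow_mul hn'.le]
    norm_num [Real.rpow_neg_one]
  have harg : ((n + 1 : ℕ) : ℂ) - 1/2 + l * I = -1/2 + l * I + (n + 1) := by push_cast; ring
  have hre : (-1/2 + l * I : ℂ).re = -1/2 := by simp
  rw [bEig, harg, norm_div, norm_mul, norm_natCast_cpow_of_pos (Nat.pos_of_ne_zero hn), hre]
  push_cast
  rw [hfact, add_sub_cancel_right, hΓn, norm_natCast, div_pow, mul_pow, hpow]
  field_simp

/-- For every real `λ`, the eigenvalues of the normalized Berezin transform converge
to `1`: `b_ν(λ) → 1` as `ν → ∞`. -/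
theorem bEig_tendsto_one (l : ℝ) :
    Tendsto (fun ν : ℕ => bEig ν l) atTop (nhds 1) := by
  have hs : ∀ k : ℕ, -1/2 + l * I ≠ -k := fun k h => by
    have hre := congrArg re h
    simp only [add_re, mul_re, I_re, I_im, ofReal_re, ofReal_im, neg_re, natCast_re] at hre
    have h2k : 2 * k = 1 := by exact_mod_cast (by norm_num at hre; linarith : (2 * k : ℝ) = 1)
    omega
  have h := (tendsto_Gamma_add_nat_add_one_div hs).norm.pow 2
  rw [norm_one, one_pow] at h
  rw [← tendsto_add_atTop_iff_nat 1]
  refine h.congr' ?_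
  filter_upwards [eventually_ne_atTop 0] with n hn
  exact (bEig_add_one_eq_norm_sq l hn).symm
end

section
/- Let ν ≥ 2 be an integer. If λ₁, λ₂ ∈ ℝ with |λ₁| ≤ |λ₂|, then b_ν(λ₂) ≤ b_ν(λ₁). Moreover, for every λ ∈ ℝ, b_ν(λ) ≤ b_ν(0) = Γ(ν−1/2)²/(Γ(ν)Γ(ν−1)) ≤ 1; in particular b_ν is uniformly bounded by 1 in both ν and λ. -/
/-!
In Euler's product `Γ(s) = lim n^s n! / (s(s+1)⋯(s+n))` with `s = x + iy`, the numerator has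
modulus `n^x n!` and every factor of the denominator has modulus `√((x+j)² + y²)`, which grows
with `|y|`; so `|Γ(x+iy)|` decreases in `|y|`. The bound `b_ν(0) ≤ 1` is log-convexity of `Γ`
at the midpoint `ν − 1/2` of `ν − 1` and `ν`.
-/

open Complex Filter

namespace Complex

lemma norm_GammaSeq {s : ℂ} {n : ℕ} (hn : n ≠ 0) :
    ‖GammaSeq s n‖ = (n : ℝ) ^ s.re * n.factorial / ∏ j ∈ Finset.range (n + 1), ‖s + j‖ := by
  rw [GammaSeq, norm_div, norm_mul, norm_prod, norm_natCast_cpow_of_pos (Nat.pos_of_ne_zero hn),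
    norm_natCast]

lemma norm_add_mul_I_le_of_abs_le (x : ℝ) {y₁ y₂ : ℝ} (hy : |y₁| ≤ |y₂|) :
    ‖(x + y₁ * I : ℂ)‖ ≤ ‖(x + y₂ * I : ℂ)‖ := by
  rw [norm_add_mul_I, norm_add_mul_I]
  exact Real.sqrt_le_sqrt (by linarith [sq_le_sq.mpr hy])

lemma norm_GammaSeq_le_of_abs_le {x y₁ y₂ : ℝ} (hx : ∀ m : ℕ, x ≠ -m) (hy : |y₁| ≤ |y₂|)
    {n : ℕ} (hn : n ≠ 0) :
    ‖GammaSeq (x + y₂ * I) n‖ ≤ ‖GammaSeq (x + y₁ * I) n‖ := by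
  have hshift (y : ℝ) (j : ℕ) : (x + y * I : ℂ) + j = ((x + j : ℝ) : ℂ) + y * I := by
    push_cast; ring
  have hfactor_pos (j : ℕ) : 0 < ‖(x + y₁ * I : ℂ) + j‖ := by
    refine norm_pos_iff.mpr fun h => hx j ?_
    have := congrArg re h
    simp only [add_re, ofReal_re, mul_re, ofReal_im, I_re, I_im, natCast_re, zero_re] at this
    linarith
  have hre (y : ℝ) : (x + y * I : ℂ).re = x := by simp
  rw [norm_GammaSeq hn, norm_GammaSeq hn, hre, hre]
  refine div_le_div_of_nonneg_left
    (mul_nonneg (Real.rpow_nonneg n.cast_nonneg _) n.factorial.cast_nonneg) (Finset.prod_pos fun j _ => hfactor_pos j) ?_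
  refine Finset.prod_le_prod (fun j _ => (hfactor_pos j).le) fun j _ => ?_
  rw [hshift, hshift]
  exact norm_add_mul_I_le_of_abs_le _ hy

theorem norm_Gamma_le_of_abs_le {x y₁ y₂ : ℝ} (hx : ∀ m : ℕ, x ≠ -m) (hy : |y₁| ≤ |y₂|) :
    ‖Gamma (x + y₂ * I)‖ ≤ ‖Gamma (x + y₁ * I)‖ :=
  le_of_tendsto_of_tendsto (GammaSeq_tendsto_Gamma _).norm (GammaSeq_tendsto_Gamma _).norm <|
    (eventually_ne_atTop 0).mono fun _ hn => norm_GammaSeq_le_of_abs_le hx hy hn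

end Complex

lemma Real.Gamma_add_div_two_sq_le {s t : ℝ} (hs : 0 < s) (ht : 0 < t) :
    Gamma ((s + t) / 2) ^ 2 ≤ Gamma s * Gamma t := by
  have hmid := Gamma_mul_add_mul_le_rpow_Gamma_mul_rpow_Gamma hs ht one_half_pos one_half_pos
    (add_halves 1)
  rw [← sqrt_eq_rpow, ← sqrt_eq_rpow, ← sqrt_mul (Gamma_pos_of_pos hs).le,
    show 1 / 2 * s + 1 / 2 * t = (s + t) / 2 by ring] at hmid
  calc Gamma ((s + t) / 2) ^ 2 ≤ √(Gamma s * Gamma t) ^ 2 :=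
        pow_le_pow_left₀ (Gamma_pos_of_pos (by positivity)).le hmid 2
    _ = Gamma s * Gamma t :=
        sq_sqrt (mul_nonneg (Gamma_pos_of_pos hs).le (Gamma_pos_of_pos ht).le)

lemma bEig_eq (ν : ℕ) (l : ℝ) :
    bEig ν l = ‖Gamma (((ν - 1 / 2 : ℝ) : ℂ) + l * I)‖ ^ 2 /
      (Real.Gamma ν * Real.Gamma ((ν : ℝ) - 1)) := by
  rw [bEig]
  push_cast
  rfl

lemma bEig_le_of_abs_le {ν : ℕ} (hν : 1 ≤ ν) {l₁ l₂ : ℝ} (hl : |l₁| ≤ |l₂|) :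
    bEig ν l₂ ≤ bEig ν l₁ := by
  have hν' : (1 : ℝ) ≤ ν := by exact_mod_cast hν
  rw [bEig_eq, bEig_eq]
  have hΓ := Complex.norm_Gamma_le_of_abs_le (x := ν - 1 / 2) (fun m h => by
    linarith [(m.cast_nonneg : (0 : ℝ) ≤ m)]) hl
  have hden : 0 ≤ Real.Gamma ν * Real.Gamma ((ν : ℝ) - 1) :=
    mul_nonneg (Real.Gamma_nonneg_of_nonneg (by linarith))
      (Real.Gamma_nonneg_of_nonneg (by linarith))
  gcongr

lemma bEig_zero (ν : ℕ) :
    bEig ν 0 = Real.Gamma ((ν : ℝ) - 1/2) ^ 2 / (Real.Gamma ν * Real.Gamma ((ν : ℝ) - 1)) := by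
  rw [bEig_eq, ofReal_zero, zero_mul, add_zero, Gamma_ofReal, norm_real, Real.norm_eq_abs,
    sq_abs]

lemma bEig_zero_le_one {ν : ℕ} (hν : 2 ≤ ν) : bEig ν 0 ≤ 1 := by
  have hν' : (2 : ℝ) ≤ ν := by exact_mod_cast hν
  have hconv := Real.Gamma_add_div_two_sq_le (s := ν) (t := ν - 1) (by linarith) (by linarith)
  rw [show ((ν : ℝ) + (ν - 1)) / 2 = ν - 1 / 2 by ring] at hconv
  rw [bEig_zero]
  exact div_le_one_of_le₀ hconv ((sq_nonneg _).trans hconv)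

/-- For `ν ≥ 2`: `b_ν` is decreasing in `|λ|`, `b_ν(λ) ≤ b_ν(0)`,
`b_ν(0) = Γ(ν−1/2)²/(Γ(ν)Γ(ν−1))`, and `b_ν(0) ≤ 1`; in particular, `b_ν` is
uniformly bounded by `1` in both `ν` and `λ`. -/
theorem bEig_monotone_bounded (ν : ℕ) (hν : 2 ≤ ν) :
    (∀ l₁ l₂ : ℝ, |l₁| ≤ |l₂| → bEig ν l₂ ≤ bEig ν l₁) ∧
    (∀ l : ℝ, bEig ν l ≤ bEig ν 0) ∧
    bEig ν 0 = Real.Gamma ((ν : ℝ) - 1/2) ^ 2 / (Real.Gamma ν * Real.Gamma ((ν : ℝ) - 1)) ∧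
    bEig ν 0 ≤ 1 := by
  have hmono : ∀ l₁ l₂ : ℝ, |l₁| ≤ |l₂| → bEig ν l₂ ≤ bEig ν l₁ :=
    fun _ _ => bEig_le_of_abs_le (by omega)
  exact ⟨hmono, fun l => hmono 0 l (by simp), bEig_zero ν, bEig_zero_le_one hν⟩
end

section
/- Fix an integer ν₀ ≥ 2. There exists a constant C > 0 such that for every integer ν ≥ ν₀ and every real λ, b_{ν₀}(λ) ≤ C · b_ν(λ); that is, the ratio b_ν(λ)^{−1}·b_{ν₀}(λ) is uniformly bounded in ν and λ. -/
open Complex Filter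

lemma mul_sub_one_le_sq_norm (x l : ℝ) : x * (x - 1) ≤ ‖(x : ℂ) - 1/2 + l * I‖ ^ 2 := by
  rw [Complex.sq_norm, Complex.normSq_apply]
  simp only [add_re, sub_re, ofReal_re, mul_re, I_re, I_im, ofReal_im, add_im, sub_im, mul_im]
  norm_num
  nlinarith [sq_nonneg l]

lemma bEig_succ (ν : ℕ) (hν : 2 ≤ ν) (l : ℝ) :
    bEig (ν + 1) l = ‖(ν : ℂ) - 1/2 + l * I‖ ^ 2 / (ν * (ν - 1)) * bEig ν l := by
  have hν' : (2 : ℝ) ≤ ν := by exact_mod_cast hν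
  unfold bEig
  set z : ℂ := (ν : ℂ) - 1/2 + l * I
  have hz : z ≠ 0 := fun h => by
    have := congrArg Complex.re h
    norm_num [z] at this
    linarith
  have hΓν : Real.Gamma ν = (ν - 1) * Real.Gamma (ν - 1) := by
    simpa using Real.Gamma_add_one (s := (ν : ℝ) - 1) (by linarith)
  rw [show ((ν + 1 : ℕ) : ℂ) - 1/2 + l * I = z + 1 by push_cast; ring, Complex.Gamma_add_one z hz,
    show ((ν + 1 : ℕ) : ℝ) - 1 = ν by push_cast; ring, Nat.cast_succ,
    Real.Gamma_add_one (by positivity), norm_mul, hΓν]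
  clear_value z
  field_simp [(by linarith : (ν : ℝ) - 1 ≠ 0)]

lemma bEig_le_bEig_succ (ν : ℕ) (hν : 2 ≤ ν) (l : ℝ) : bEig ν l ≤ bEig (ν + 1) l := by
  have hν' : (2 : ℝ) ≤ ν := by exact_mod_cast hν
  have hratio : 1 ≤ ‖(ν : ℂ) - 1/2 + l * I‖ ^ 2 / (ν * (ν - 1)) :=
    (one_le_div (by nlinarith)).2 (mul_sub_one_le_sq_norm ν l)
  have hnonneg : 0 ≤ bEig ν l :=
    div_nonneg (sq_nonneg _) (mul_nonneg (Real.Gamma_pos_of_pos (by linarith)).le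
      (Real.Gamma_pos_of_pos (by linarith)).le)
  rw [bEig_succ ν hν l]
  exact le_mul_of_one_le_left hnonneg hratio

lemma bEig_mono {ν₀ ν : ℕ} (hν₀ : 2 ≤ ν₀) (hν : ν₀ ≤ ν) (l : ℝ) : bEig ν₀ l ≤ bEig ν l := by
  induction ν, hν using Nat.le_induction with
  | base => exact le_rfl
  | succ n hn ih => exact ih.trans (bEig_le_bEig_succ n (hν₀.trans hn) l)

/-- For a fixed integer `ν₀ ≥ 2`, there is a constant `C > 0` such that
`b_{ν₀}(λ) ≤ C·b_ν(λ)` for all integers `ν ≥ ν₀` and all real `λ`; i.e. the ratio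
`b_ν(λ)⁻¹·b_{ν₀}(λ)` is uniformly bounded in `ν` and `λ`. -/
theorem bEig_ratio_uniformly_bounded (ν₀ : ℕ) (hν₀ : 2 ≤ ν₀) :
    ∃ C : ℝ, 0 < C ∧ ∀ ν : ℕ, ν₀ ≤ ν → ∀ l : ℝ, bEig ν₀ l ≤ C * bEig ν l :=
  ⟨1, one_pos, fun _ hν l => by simpa using bEig_mono hν₀ hν l⟩
end

section
/- Let κ ≥ 2 be an integer and j ∈ ℕ. Then the series ∑_{i=0}^{∞} ((κ)_i / i!) · ((i+j)! / (2κ)_{i+j}) converges and equals ((2κ−1)/(κ−1)) · (j! / (κ)_j). -/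
open MeasureTheory intervalIntegral Finset

lemma poch_nat_cast (c n : ℕ) : poch (c : ℝ) n = (c.ascFactorial n : ℝ) := by
  induction n with
  | zero => simp [poch]
  | succ n ih =>
      rw [poch, Finset.prod_range_succ, ← poch, ih, Nat.ascFactorial_succ]
      push_cast; ring

lemma beta_nat (m n : ℕ) :
    ∫ x in (0:ℝ)..1, x ^ m * (1 - x) ^ n = (m.factorial * n.factorial : ℝ) / (m + n + 1).factorial := by
  have h := Complex.betaIntegral_eval_nat_add_one_right (u := (m + 1 : ℂ)) (by simp; positivity) n
  rw [Complex.betaIntegral] at h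
  have h2 : ∀ x : ℝ, (x:ℂ) ^ ((m:ℂ) + 1 - 1) * ((1:ℂ) - x) ^ ((n:ℂ) + 1 - 1)
      = ((x ^ m * (1 - x) ^ n : ℝ) : ℂ) := by
    intro x
    have e1 : ((m:ℂ) + 1 - 1) = ((m : ℕ) : ℂ) := by ring
    have e2 : ((n:ℂ) + 1 - 1) = ((n : ℕ) : ℂ) := by ring
    rw [e1, e2, Complex.cpow_natCast, Complex.cpow_natCast]
    push_cast; ring
  rw [intervalIntegral.integral_congr (fun x _ => h2 x), intervalIntegral.integral_ofReal] at h
  have h3 : (∏ i ∈ Finset.range (n+1), ((m:ℂ) + 1 + i)) = ((m + n + 1).factorial : ℂ) / (m.factorial : ℂ) := by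
    have : (∏ i ∈ Finset.range (n+1), ((m:ℂ) + 1 + i)) = (((m+1).ascFactorial (n+1) : ℕ) : ℂ) := by
      induction (n+1) with
      | zero => simp
      | succ t ih =>
          rw [Finset.prod_range_succ, ih, Nat.ascFactorial_succ]
          push_cast; ring
    rw [this]
    rw [eq_div_iff (by exact_mod_cast Nat.factorial_ne_zero m)]
    rw [← Nat.cast_mul, mul_comm, Nat.factorial_mul_ascFactorial]
    norm_cast
  rw [h3] at h
  have hm : (m.factorial : ℂ) ≠ 0 := by exact_mod_cast Nat.factorial_ne_zero m
  have hmn : ((m + n + 1).factorial : ℂ) ≠ 0 := by exact_mod_cast Nat.factorial_ne_zero (m+n+1)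
  have : ((∫ x in (0:ℝ)..1, x ^ m * (1 - x) ^ n : ℝ) : ℂ) = ((m.factorial * n.factorial : ℝ) / (m + n + 1).factorial : ℝ) := by
    rw [h]
    push_cast
    field_simp
  exact_mod_cast this

section Main
variable (k j : ℕ)

lemma poch1 (i : ℕ) : poch ((k + 2 : ℕ) : ℝ) i
    = (i.factorial : ℝ) * ((i + (k+1)).choose (k+1) : ℝ) := by
  rw [poch_nat_cast]
  have : (k+2).ascFactorial i = i.factorial * (i + (k+1)).choose (k+1) := by
    have h1 : (k+2).ascFactorial i = i.factorial * ((k+1) + i).choose i :=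
      Nat.ascFactorial_eq_factorial_mul_choose (k+1) i
    rw [h1]
    congr 1
    rw [show i + (k+1) = (k+1) + i by omega]
    exact Nat.choose_symm_add.symm
  exact_mod_cast congrArg (Nat.cast : ℕ → ℝ) this

lemma poch2 (m : ℕ) : poch (2 * ((k + 2 : ℕ) : ℝ)) m
    = ((m + (2*k+3)).factorial : ℝ) / ((2*k+3).factorial : ℝ) := by
  have e : 2 * ((k + 2 : ℕ) : ℝ) = ((2*k+4 : ℕ) : ℝ) := by push_cast; ring
  rw [e, poch_nat_cast, eq_div_iff (by exact_mod_cast Nat.factorial_ne_zero _)]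
  have := Nat.factorial_mul_ascFactorial (2*k+3) m
  have e2 : 2*k+3+1 = 2*k+4 := by omega
  rw [e2] at this
  rw [show m + (2*k+3) = 2*k+3+m by omega]
  have h := Nat.factorial_mul_ascFactorial (2*k+3) m
  rw [show 2*k+3+1 = 2*k+4 by omega, mul_comm] at h
  exact_mod_cast congrArg (Nat.cast : ℕ → ℝ) h

end Main

section Main2
variable (k j : ℕ)

noncomputable def FF (k j : ℕ) (i : ℕ) (x : ℝ) : ℝ :=
  ((i + (k+1)).choose (k+1) : ℝ) * ((2*k+3 : ℝ) * (x ^ (i+j) * (1-x) ^ (2*k+2)))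

lemma beta_Ioo (m n : ℕ) :
    ∫ x in Set.Ioo (0:ℝ) 1, x ^ m * (1 - x) ^ n
      = (m.factorial * n.factorial : ℝ) / (m + n + 1).factorial := by
  rw [← MeasureTheory.integral_Ioc_eq_integral_Ioo,
    ← intervalIntegral.integral_of_le (zero_le_one)]
  exact beta_nat m n

lemma FF_cont (i : ℕ) : Continuous (FF k j i) := by
  unfold FF; fun_prop

lemma FF_integral (i : ℕ) :
    ∫ x in Set.Ioo (0:ℝ) 1, FF k j i x
      = ((i + (k+1)).choose (k+1) : ℝ) *
        ((2*k+3 : ℝ) * (((i+j).factorial * (2*k+2).factorial : ℝ) / ((i+j) + (2*k+2) + 1).factorial)) := by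
  unfold FF
  rw [MeasureTheory.integral_const_mul, MeasureTheory.integral_const_mul, beta_Ioo]

lemma term_eq (i : ℕ) :
    poch ((k + 2 : ℕ) : ℝ) i / (Nat.factorial i : ℝ) *
        ((Nat.factorial (i + j) : ℝ) / poch (2 * ((k + 2 : ℕ) : ℝ)) (i + j))
      = ∫ x in Set.Ioo (0:ℝ) 1, FF k j i x := by
  rw [FF_integral, poch1, poch2]
  rw [show (i+j) + (2*k+2) + 1 = (i+j) + (2*k+3) by omega]
  have h1 : ((2*k+3).factorial : ℝ) = (2*k+3 : ℝ) * ((2*k+2).factorial : ℝ) := by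
    exact_mod_cast congrArg (Nat.cast : ℕ → ℝ) (Nat.factorial_succ (2*k+2))
  have n1 : (Nat.factorial i : ℝ) ≠ 0 := by exact_mod_cast Nat.factorial_ne_zero i
  have n2 : (((i+j) + (2*k+3)).factorial : ℝ) ≠ 0 := by exact_mod_cast Nat.factorial_ne_zero _
  have n3 : ((2*k+3).factorial : ℝ) ≠ 0 := by exact_mod_cast Nat.factorial_ne_zero _
  rw [h1]
  field_simp
  try ring
  try tauto

end Main2

section Main3
variable (k j : ℕ)

lemma FF_hasSum {x : ℝ} (hx : x ∈ Set.Ioo (0:ℝ) 1) :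
    HasSum (fun i => FF k j i x) ((2*k+3 : ℝ) * (x ^ j * (1-x) ^ k)) := by
  obtain ⟨hx0, hx1⟩ := hx
  have hn : ‖x‖ < 1 := by rw [Real.norm_eq_abs, abs_of_pos hx0]; exact hx1
  have h := hasSum_choose_mul_geometric_of_norm_lt_one (𝕜 := ℝ) (k+1) hn
  have h2 := h.mul_right ((2*k+3 : ℝ) * (x ^ j * (1-x) ^ (2*k+2)))
  have hne : (1 - x) ≠ 0 := by linarith
  have hval : 1/(1-x)^((k+1)+1) * ((2*k+3 : ℝ) * (x ^ j * (1-x) ^ (2*k+2)))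
      = (2*k+3 : ℝ) * (x ^ j * (1-x) ^ k) := by
    rw [show (k+1)+1 = k+2 by omega, show 2*k+2 = (k+2)+k by omega, pow_add]
    field_simp
    ring
  have hfun : (fun i => FF k j i x)
      = fun i => ((i + (k+1)).choose (k+1) : ℝ) * x ^ i * ((2*k+3 : ℝ) * (x ^ j * (1-x) ^ (2*k+2))) := by
    funext i
    unfold FF
    rw [pow_add]
    ring
  rw [hfun, ← hval]
  exact h2

lemma FF_bound (i : ℕ) :
    ((i + (k+1)).choose (k+1) : ℝ) *
        ((2*k+3 : ℝ) * (((i+j).factorial * (2*k+2).factorial : ℝ) / ((i+j) + (2*k+2) + 1).factorial))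
      ≤ ((2*k+3 : ℝ) * (2*k+2).factorial * (k+2)^(k+1)) * (1 / ((i:ℝ)+1)^2) := by
  have hN : (i + (k+1)).choose (k+1) * (i+j).factorial * (i+1)^2
      ≤ (k+2)^(k+1) * ((i+j) + (2*k+2) + 1).factorial := by
    calc (i + (k+1)).choose (k+1) * (i+j).factorial * (i+1)^2
        ≤ (i + (k+1))^(k+1) * (i+j).factorial * (i+1)^2 := by
          gcongr
          exact Nat.choose_le_pow _ _
      _ ≤ ((k+2) * (i+1))^(k+1) * (i+j).factorial * (i+1)^2 := by
          gcongr
          nlinarith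
      _ = (k+2)^(k+1) * ((i+j).factorial * (i+1)^(k+3)) := by
          rw [Nat.mul_pow]; ring
      _ ≤ (k+2)^(k+1) * ((i+j).factorial * (i+1)^(2*k+3)) := by
          gcongr (k+2)^(k+1) * ((i+j).factorial * ?_)
          exact Nat.pow_le_pow_right (by omega) (by omega)
      _ ≤ (k+2)^(k+1) * ((i+j).factorial * ((i+j)+1)^(2*k+3)) := by
          gcongr
          omega
      _ ≤ (k+2)^(k+1) * ((i+j) + (2*k+2) + 1).factorial := by
          gcongr
          have := Nat.factorial_mul_pow_le_factorial (m := i+j) (n := 2*k+3)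
          calc (i+j).factorial * ((i+j)+1)^(2*k+3) ≤ ((i+j) + (2*k+3)).factorial := this
            _ = ((i+j) + (2*k+2) + 1).factorial := by rw [show (i+j)+(2*k+3) = (i+j)+(2*k+2)+1 by omega]
  have hNr : ((i + (k+1)).choose (k+1) : ℝ) * (i+j).factorial * ((i:ℝ)+1)^2
      ≤ ((k+2):ℝ)^(k+1) * ((i+j) + (2*k+2) + 1).factorial := by exact_mod_cast hN
  have hD : (0:ℝ) < (((i+j) + (2*k+2) + 1).factorial : ℝ) := by
    exact_mod_cast Nat.factorial_pos _
  have hi1 : (0:ℝ) < ((i:ℝ)+1)^2 := by positivity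
  rw [show ((i + (k+1)).choose (k+1) : ℝ) *
        ((2*k+3 : ℝ) * (((i+j).factorial * (2*k+2).factorial : ℝ) / ((i+j) + (2*k+2) + 1).factorial))
      = ((2*k+3 : ℝ) * (2*k+2).factorial * (((i + (k+1)).choose (k+1) : ℝ) * (i+j).factorial))
        / ((i+j) + (2*k+2) + 1).factorial by ring,
    show ((2*k+3 : ℝ) * (2*k+2).factorial * (k+2)^(k+1)) * (1 / ((i:ℝ)+1)^2)
      = ((2*k+3 : ℝ) * (2*k+2).factorial * (k+2)^(k+1)) / ((i:ℝ)+1)^2 by ring,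
    div_le_div_iff₀ hD hi1]
  calc (2*k+3 : ℝ) * (2*k+2).factorial * (((i + (k+1)).choose (k+1) : ℝ) * (i+j).factorial) * (((i:ℝ)+1)^2)
      = ((2*k+3 : ℝ) * (2*k+2).factorial) * (((i + (k+1)).choose (k+1) : ℝ) * (i+j).factorial * (((i:ℝ)+1)^2)) := by ring
    _ ≤ ((2*k+3 : ℝ) * (2*k+2).factorial) * (((k+2):ℝ)^(k+1) * ((i+j) + (2*k+2) + 1).factorial) := by
        have hb : (0:ℝ) ≤ (2*k+3 : ℝ) * (2*k+2).factorial := by positivity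
        exact mul_le_mul_of_nonneg_left hNr hb
    _ = (2*k+3 : ℝ) * (2*k+2).factorial * (k+2)^(k+1) * ((i+j) + (2*k+2) + 1).factorial := by ring

end Main3

/-- For an integer `κ ≥ 2` and `j ∈ ℕ`, the series
`∑_{i=0}^{∞} ((κ)_i/i!)·((i+j)!/(2κ)_{i+j})` converges to `((2κ−1)/(κ−1))·(j!/(κ)_j)`. -/
theorem pochhammer_series_sum (κ : ℕ) (hκ : 2 ≤ κ) (j : ℕ) :
    HasSum
      (fun i : ℕ => poch (κ : ℝ) i / (Nat.factorial i : ℝ) *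
        ((Nat.factorial (i + j) : ℝ) / poch (2 * (κ : ℝ)) (i + j)))
      (((2 * (κ : ℝ)) - 1) / ((κ : ℝ) - 1) * ((Nat.factorial j : ℝ) / poch (κ : ℝ) j)) := by
  obtain ⟨k, rfl⟩ : ∃ k, κ = k + 2 := ⟨κ - 2, by omega⟩
  have hInt : ∀ i, MeasureTheory.Integrable (FF k j i) (MeasureTheory.volume.restrict (Set.Ioo (0:ℝ) 1)) :=
    fun i => ((FF_cont k j i).integrableOn_Icc).mono_set Set.Ioo_subset_Icc_self
  have hnormint : ∀ i, (∫ x in Set.Ioo (0:ℝ) 1, ‖FF k j i x‖) = ∫ x in Set.Ioo (0:ℝ) 1, FF k j i x := by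
    intro i
    refine MeasureTheory.setIntegral_congr_fun measurableSet_Ioo (fun x hx => ?_)
    obtain ⟨hx0, hx1⟩ := hx
    have h1 : (0:ℝ) ≤ 1 - x := by linarith
    have : (0:ℝ) ≤ FF k j i x := by unfold FF; positivity
    exact Real.norm_of_nonneg this
  have hSum : Summable fun i => ∫ x in Set.Ioo (0:ℝ) 1, ‖FF k j i x‖ := by
    have base : Summable (fun n : ℕ => 1 / ((n:ℝ))^2) :=
      Real.summable_one_div_nat_pow.mpr one_lt_two
    have shift : Summable (fun i : ℕ => 1 / ((i:ℝ)+1)^2) := by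
      have := (summable_nat_add_iff 1).mpr base
      refine this.congr fun i => ?_
      push_cast
      ring_nf
    have shift2 := shift.mul_left ((2*k+3 : ℝ) * (2*k+2).factorial * (k+2)^(k+1))
    refine shift2.of_nonneg_of_le (fun i => ?_) (fun i => ?_)
    · exact MeasureTheory.integral_nonneg (fun x => norm_nonneg _)
    · rw [hnormint i, FF_integral]
      calc ((i + (k+1)).choose (k+1) : ℝ) *
            ((2*k+3 : ℝ) * (((i+j).factorial * (2*k+2).factorial : ℝ) / ((i+j) + (2*k+2) + 1).factorial))
          ≤ ((2*k+3 : ℝ) * (2*k+2).factorial * (k+2)^(k+1)) * (1 / ((i:ℝ)+1)^2) := FF_bound k j i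
        _ = (2*k+3 : ℝ) * (2*k+2).factorial * (k+2)^(k+1) * (1 / ((i:ℝ)+1)^2) := by ring
  have H := MeasureTheory.hasSum_integral_of_summable_integral_norm hInt hSum
  have hts : (∫ x in Set.Ioo (0:ℝ) 1, (∑' i, FF k j i x))
      = ∫ x in Set.Ioo (0:ℝ) 1, (2*k+3 : ℝ) * (x ^ j * (1-x) ^ k) := by
    refine MeasureTheory.setIntegral_congr_fun measurableSet_Ioo (fun x hx => ?_)
    exact (FF_hasSum k j hx).tsum_eq
  have hval : (∫ x in Set.Ioo (0:ℝ) 1, (2*k+3 : ℝ) * (x ^ j * (1-x) ^ k))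
      = (2*k+3 : ℝ) * ((j.factorial * k.factorial : ℝ) / (j + k + 1).factorial) := by
    rw [MeasureTheory.integral_const_mul, beta_Ioo]
  rw [hts, hval] at H
  have hfun : (fun i : ℕ => poch (((k+2 : ℕ)) : ℝ) i / (Nat.factorial i : ℝ) *
        ((Nat.factorial (i + j) : ℝ) / poch (2 * (((k+2:ℕ)) : ℝ)) (i + j)))
      = fun i => ∫ x in Set.Ioo (0:ℝ) 1, FF k j i x := by
    funext i
    exact term_eq k j i
  have htarget : ((2 * (((k+2:ℕ)) : ℝ)) - 1) / ((((k+2:ℕ)) : ℝ) - 1) *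
        ((Nat.factorial j : ℝ) / poch (((k+2:ℕ)) : ℝ) j)
      = (2*k+3 : ℝ) * ((j.factorial * k.factorial : ℝ) / (j + k + 1).factorial) := by
    rw [poch1]
    have hch := Nat.choose_mul_factorial_mul_factorial (show k+1 ≤ j + (k+1) by omega)
    rw [show j + (k+1) - (k+1) = j by omega] at hch
    have hchr : ((j + (k+1)).choose (k+1) : ℝ) * ((k+1).factorial : ℝ) * (j.factorial : ℝ)
        = ((j + (k+1)).factorial : ℝ) := by exact_mod_cast hch
    have e1 : ((j + (k+1)).factorial : ℝ) = ((j + k + 1).factorial : ℝ) := by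
      rw [show j + (k+1) = j + k + 1 by omega]
    have e2 : ((k+1).factorial : ℝ) = ((k:ℝ)+1) * (k.factorial : ℝ) := by
      exact_mod_cast congrArg (Nat.cast : ℕ → ℝ) (Nat.factorial_succ k)
    rw [e1, e2] at hchr
    have hchpos : (0:ℝ) < ((j + (k+1)).choose (k+1) : ℝ) := by
      exact_mod_cast Nat.choose_pos (show k+1 ≤ j + (k+1) by omega)
    have hjf : ((j.factorial : ℝ)) ≠ 0 := by exact_mod_cast Nat.factorial_ne_zero j
    have hjk : ((j+k+1).factorial : ℝ) ≠ 0 := by exact_mod_cast Nat.factorial_ne_zero _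
    have hk1 : ((k:ℝ)+1) ≠ 0 := by positivity
    have hchne : ((j + (k+1)).choose (k+1) : ℝ) ≠ 0 := ne_of_gt hchpos
    have hkf : ((k.factorial : ℝ)) ≠ 0 := by exact_mod_cast Nat.factorial_ne_zero k
    have ec : (((k+2:ℕ)) : ℝ) = (k:ℝ)+2 := by push_cast; ring
    rw [← hchr, ec, div_mul_div_comm, mul_div_assoc', div_eq_div_iff (by
      rw [show ((k:ℝ)+2-1) = (k:ℝ)+1 by ring]
      exact mul_ne_zero hk1 (mul_ne_zero hjf hchne)) (by
      exact mul_ne_zero (mul_ne_zero hchne (mul_ne_zero hk1 hkf)) hjf)]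
    ring
  rw [hfun, htarget]
  exact H
end
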